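/- Let p, q be meromorphic on ℂ with q not identically zero, let n ∈ ℕ, and let F(E,x) = Σ_{ℓ=0}^{n} f_{n−ℓ}(x) Eˡ be a polynomial of degree n in E with coefficients f₀, …, f_n meromorphic in x and f₀ = −i q. Suppose there is a polynomial R(E) = Σ_{m=0}^{2n+2} γ_{2n+2−m} Eᵐ with constant coefficients such that, identically in x and E, (1/(4 q(x)³)) { q(x) ( 2 F(E,x) F_{xx}(E,x) − F_x(E,x)² + 4 (E² − p(x) q(x)) F(E,x)² ) − q_x(x) ( 2 F(E,x) F_x(E,x) + 4 i E F(E,x)² ) } = R(E); that is, this expression is independent of x. Then (p,q) is a meromorphic algebro-geometric AKNS potential: there exist meromorphic functions g₀ = 1, g₁, …, g_{n+1} and h₀ = i p, h₁, …, h_n such that F, G(E,x) = Σ_{ℓ=0}^{n+1} g_{n+1−ℓ}(x) Eˡ and H(E,x) = Σ_{ℓ=0}^{n} h_{n−ℓ}(x) Eˡ satisfy the stationary zero-curvature system ∂F/∂x = −2iE F + 2q G, ∂G/∂x = p F + q H, ∂H/∂x = 2iE H + 2p G for every E ∈ ℂ. -/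

import Mathlib

open Complex

noncomputable section

/-- `akPoly n f E x = ∑_{ℓ=0}^{n} f_{n-ℓ}(x) E^ℓ`. -/
def akPoly (n : ℕ) (f : ℕ → ℂ → ℂ) (E x : ℂ) : ℂ :=
  ∑ ℓ ∈ Finset.range (n + 1), f (n - ℓ) x * E ^ ℓ

/-- The stationary zero-curvature system `F_x = -2iE F + 2q G`, `G_x = p F + q H`,
`H_x = 2iE H + 2p G` holds off the exceptional set `S`. -/
def ZeroCurvOn (p q : ℂ → ℂ) (n : ℕ) (f g h : ℕ → ℂ → ℂ) (S : Set ℂ) : Prop :=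
  ∀ E : ℂ, ∀ x ∉ S,
    deriv (fun y => akPoly n f E y) x
      = -2 * I * E * akPoly n f E x + 2 * q x * akPoly (n + 1) g E x ∧
    deriv (fun y => akPoly (n + 1) g E y) x
      = p x * akPoly n f E x + q x * akPoly n h E x ∧
    deriv (fun y => akPoly n h E y) x
      = 2 * I * E * akPoly n h E x + 2 * p x * akPoly (n + 1) g E x

/-- `(p,q)` is a meromorphic algebro-geometric AKNS potential with data `n, f, g, h`,
where all functions involved are meromorphic on `ℂ` and analytic off the closed
countable set `S`, and `f 0 = -i q`, `g 0 = 1`, `h 0 = i p`. -/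
def IsAGData (p q : ℂ → ℂ) (n : ℕ) (f g h : ℕ → ℂ → ℂ) (S : Set ℂ) : Prop :=
  MeromorphicOn p Set.univ ∧ MeromorphicOn q Set.univ ∧
  (∀ k, MeromorphicOn (f k) Set.univ) ∧
  (∀ k, MeromorphicOn (g k) Set.univ) ∧
  (∀ k, MeromorphicOn (h k) Set.univ) ∧
  S.Countable ∧ IsClosed S ∧
  (∀ x ∉ S, AnalyticAt ℂ p x ∧ AnalyticAt ℂ q x ∧
    (∀ k, AnalyticAt ℂ (f k) x ∧ AnalyticAt ℂ (g k) x ∧ AnalyticAt ℂ (h k) x)) ∧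
  f 0 = (fun x => -I * q x) ∧
  g 0 = (fun _ => (1 : ℂ)) ∧
  h 0 = (fun x => I * p x) ∧
  ZeroCurvOn p q n f g h S

/-- `(p,q)` is a meromorphic algebro-geometric AKNS potential. -/
def IsAGAKNS (p q : ℂ → ℂ) : Prop :=
  ∃ n f g h S, IsAGData p q n f g h S

/-- `(ψ₁, ψ₂)` is a solution of the AKNS system `JΨ' + QΨ = EΨ` on `ℂ`
(away from a closed countable exceptional set). -/
def SolvesAKNS (p q : ℂ → ℂ) (E : ℂ) (ψ₁ ψ₂ : ℂ → ℂ) : Prop :=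
  ∃ S : Set ℂ, S.Countable ∧ IsClosed S ∧ ∀ x ∉ S,
    DifferentiableAt ℂ ψ₁ x ∧ DifferentiableAt ℂ ψ₂ x ∧
    I * deriv ψ₁ x - I * q x * ψ₂ x = E * ψ₁ x ∧
    -I * deriv ψ₂ x + I * p x * ψ₁ x = E * ψ₂ x

/-- The AKNS system with potentials `(p,q)` and spectral parameter `E` admits two solutions,
each meromorphic on all of `ℂ`, with Wronskian `ψ₁₁ψ₂₂ - ψ₁₂ψ₂₁` not identically zero. -/
def MeroFundSys (p q : ℂ → ℂ) (E : ℂ) : Prop :=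
  ∃ ψ₁₁ ψ₁₂ ψ₂₁ ψ₂₂ : ℂ → ℂ,
    MeromorphicOn ψ₁₁ Set.univ ∧ MeromorphicOn ψ₁₂ Set.univ ∧
    MeromorphicOn ψ₂₁ Set.univ ∧ MeromorphicOn ψ₂₂ Set.univ ∧
    SolvesAKNS p q E ψ₁₁ ψ₁₂ ∧ SolvesAKNS p q E ψ₂₁ ψ₂₂ ∧
    ∃ x, ψ₁₁ x * ψ₂₂ x - ψ₁₂ x * ψ₂₁ x ≠ 0

/-- `f` is elliptic with fundamental periods `2ω₁`, `2ω₃`: meromorphic on `ℂ`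
and doubly periodic. -/
def IsEllipticWith (ω₁ ω₃ : ℂ) (f : ℂ → ℂ) : Prop :=
  MeromorphicOn f Set.univ ∧
  (∀ z, f (z + 2 * ω₁) = f z) ∧ (∀ z, f (z + 2 * ω₃) = f z)


open Filter Topology in
lemma analyticAt_deriv' {f : ℂ → ℂ} {x : ℂ} (h : AnalyticAt ℂ f x) :
    AnalyticAt ℂ (deriv f) x := by
  have : deriv f = fun y => fderiv ℂ f y 1 := by ext y; rfl
  rw [this]
  exact (ContinuousLinearMap.apply ℂ ℂ (1:ℂ)).analyticAt _ |>.comp h.fderiv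

open Filter Topology in
lemma MeromorphicAt.deriv'' {f : ℂ → ℂ} {x : ℂ} (h : MeromorphicAt f x) :
    MeromorphicAt (deriv f) x := by
  obtain ⟨n, hA⟩ := h
  match n with
  | 0 =>
    simp only [pow_zero, one_smul] at hA
    exact (analyticAt_deriv' hA).meromorphicAt
  | (m+1) =>
    set A : ℂ → ℂ := fun z => (z - x) ^ (m+1) • f z with hAdef
    set D : ℂ → ℂ := fun z => (deriv A z * (z - x) - (m+1) * A z) / (z - x)^(m+2) with hD
    have hDm : MeromorphicAt D x := by
      apply MeromorphicAt.div
      · exact (((analyticAt_deriv' hA).meromorphicAt).mul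
          ((MeromorphicAt.id x).sub (.const _ x))).sub
          ((MeromorphicAt.const _ x).mul hA.meromorphicAt)
      · exact ((MeromorphicAt.id x).sub (.const _ x)).pow _
    apply hDm.congr
    have hev : ∀ᶠ z in 𝓝 x, AnalyticAt ℂ A z := hA.eventually_analyticAt
    rw [Filter.EventuallyEq, eventually_nhdsWithin_iff]
    filter_upwards [hev] with z hz hzx
    have hzx' : z - x ≠ 0 := sub_ne_zero.mpr hzx
    have hfg : f =ᶠ[𝓝 z] fun w => A w / (w - x)^(m+1) := by
      have : {w : ℂ | w ≠ x} ∈ 𝓝 z := isOpen_ne.mem_nhds hzx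
      filter_upwards [this] with w hw
      have : w - x ≠ 0 := sub_ne_zero.mpr hw
      simp only [hAdef, smul_eq_mul]
      field_simp
    have hpow : HasDerivAt (fun w => (w - x)^(m+1)) ((m+1 : ℕ) * (z - x)^m) z := by
      simpa using ((hasDerivAt_id z).sub_const x).fun_pow (m+1)
    have hdA : HasDerivAt A (deriv A z) z := hz.differentiableAt.hasDerivAt
    have hder : HasDerivAt (fun w => A w / (w - x)^(m+1))
        ((deriv A z * (z - x)^(m+1) - A z * ((m+1 : ℕ) * (z - x)^m)) / ((z - x)^(m+1))^2) z :=
      hdA.div hpow (pow_ne_zero _ hzx')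
    rw [show D z = (deriv A z * (z - x) - (m+1) * A z) / (z - x)^(m+2) from rfl,
      hfg.deriv_eq, hder.deriv]
    field_simp
    push_cast
    ring

lemma deriv_akPoly (m : ℕ) (a : ℕ → ℂ → ℂ) (E x : ℂ)
    (h : ∀ k, DifferentiableAt ℂ (a k) x) :
    deriv (fun y => akPoly m a E y) x = akPoly m (fun k => deriv (a k)) E x := by
  unfold akPoly
  rw [deriv_fun_sum (fun ℓ _ => ((h (m - ℓ)).mul_const (E ^ ℓ)))]
  exact Finset.sum_congr rfl fun ℓ _ => by rw [deriv_mul_const (h (m - ℓ))]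

lemma akPoly_differentiableAt (m : ℕ) (a : ℕ → ℂ → ℂ) (E x : ℂ)
    (h : ∀ k, DifferentiableAt ℂ (a k) x) :
    DifferentiableAt ℂ (fun y => akPoly m a E y) x := by
  unfold akPoly
  exact DifferentiableAt.fun_sum fun ℓ _ => (h (m - ℓ)).mul_const (E ^ ℓ)

lemma akPoly_shift (m : ℕ) (a : ℕ → ℂ → ℂ) (E x : ℂ) :
    akPoly (m+1) (fun k => if k ≤ m then a k else fun _ => 0) E x = E * akPoly m a E x := by
  unfold akPoly
  rw [Finset.sum_range_succ' (fun ℓ => (if m+1-ℓ ≤ m then a (m+1-ℓ) else fun _ => 0) x * E ^ ℓ)]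
  have h0 : (if m+1-0 ≤ m then a (m+1-0) else fun _ => (0:ℂ)) x * E ^ 0 = 0 := by
    norm_num
  rw [h0, add_zero, Finset.mul_sum]
  refine Finset.sum_congr rfl fun ℓ hℓ => ?_
  rw [Finset.mem_range] at hℓ
  have h1 : m + 1 - (ℓ + 1) = m - ℓ := by omega
  have h2 : m - ℓ ≤ m := Nat.sub_le _ _
  rw [h1, if_pos h2]
  ring

/-- The second family of coefficients. -/
def gFam (n : ℕ) (f : ℕ → ℂ → ℂ) (q : ℂ → ℂ) : ℕ → ℂ → ℂ
  | 0 => fun _ => 1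
  | (k+1) => fun x => (deriv (f k) x + 2*I*(if k+1 ≤ n then f (k+1) x else 0)) / (2*q x)

/-- The third family of coefficients, formula version. -/
def hFam0 (n : ℕ) (f : ℕ → ℂ → ℂ) (q p : ℂ → ℂ) (k : ℕ) : ℂ → ℂ :=
  fun x => (deriv (gFam n f q (k+1)) x - p x * f k x) / q x

/-- The third family of coefficients. -/
def hFam (n : ℕ) (f : ℕ → ℂ → ℂ) (q p : ℂ → ℂ) : ℕ → ℂ → ℂ
  | 0 => fun x => I * p x
  | (k+1) => hFam0 n f q p (k+1)

lemma gRepr (n : ℕ) (f : ℕ → ℂ → ℂ) (q : ℂ → ℂ) (E x : ℂ) (hq : q x ≠ 0)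
    (hf0 : f 0 = fun x => -I * q x) :
    2 * q x * akPoly (n+1) (gFam n f q) E x
      = akPoly n (fun k => deriv (f k)) E x + 2*I*E*akPoly n f E x := by
  have hfs : E * akPoly n f E x
      = akPoly (n+1) (fun k => if k ≤ n then f k else fun _ => 0) E x :=
    (akPoly_shift n f E x).symm
  unfold akPoly at *
  rw [Finset.mul_sum, Finset.sum_range_succ]
  have htop : 2 * q x * (gFam n f q (n + 1 - (n+1)) x * E ^ (n+1)) = 2 * q x * E^(n+1) := by
    simp [gFam]
  rw [htop]
  have hmid : ∀ ℓ ∈ Finset.range (n+1),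
      2 * q x * (gFam n f q (n + 1 - ℓ) x * E ^ ℓ)
        = deriv (f (n - ℓ)) x * E ^ ℓ
          + 2*I*((if n+1-ℓ ≤ n then f (n+1-ℓ) x else 0) * E ^ ℓ) := by
    intro ℓ hℓ
    rw [Finset.mem_range] at hℓ
    have h1 : n + 1 - ℓ = (n - ℓ) + 1 := by omega
    rw [h1, gFam]
    rw [show n - ℓ + 1 = n + 1 - ℓ from by omega]
    by_cases hc : n + 1 - ℓ ≤ n <;> simp only [hc, if_true, if_false] <;> field_simp <;> ring
  rw [Finset.sum_congr rfl hmid, Finset.sum_add_distrib, ← Finset.mul_sum]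
  have hsum : ∑ ℓ ∈ Finset.range (n+1), (if n+1-ℓ ≤ n then f (n+1-ℓ) x else 0) * E ^ ℓ
      = E * ∑ ℓ ∈ Finset.range (n + 1), f (n - ℓ) x * E ^ ℓ - f 0 x * E^(n+1) := by
    have hcongr : ∀ ℓ ∈ Finset.range (n+1),
        (fun k => if k ≤ n then f k else fun _ => (0:ℂ)) (n+1-ℓ) x * E ^ ℓ
          = (if n+1-ℓ ≤ n then f (n+1-ℓ) x else 0) * E ^ ℓ := by
      intro ℓ hℓ
      by_cases hc : n+1-ℓ ≤ n <;> simp [hc]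
    have hsplit : ∑ ℓ ∈ Finset.range (n+1+1),
        (fun k => if k ≤ n then f k else fun _ => (0:ℂ)) (n+1-ℓ) x * E ^ ℓ
          = (∑ ℓ ∈ Finset.range (n+1), (if n+1-ℓ ≤ n then f (n+1-ℓ) x else 0) * E ^ ℓ)
            + f 0 x * E^(n+1) := by
      rw [Finset.sum_range_succ, Finset.sum_congr rfl hcongr]
      simp
    rw [hfs, hsplit]
    ring
  rw [hsum, hf0]
  linear_combination 2 * q x * E^(n+1) * Complex.I_sq

lemma hRepr (n : ℕ) (f : ℕ → ℂ → ℂ) (q p : ℂ → ℂ) (E x : ℂ) (hq : q x ≠ 0) :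
    q x * akPoly n (hFam0 n f q p) E x
      = akPoly (n+1) (fun k => deriv (gFam n f q k)) E x - p x * akPoly n f E x := by
  unfold akPoly
  rw [Finset.sum_range_succ (fun ℓ => deriv (gFam n f q (n + 1 - ℓ)) x * E ^ ℓ)]
  have htop : deriv (gFam n f q (n + 1 - (n+1))) x * E ^ (n+1) = 0 := by
    rw [Nat.sub_self]
    have : gFam n f q 0 = fun _ => (1:ℂ) := rfl
    rw [this, deriv_const']
    ring
  rw [htop, add_zero, Finset.mul_sum, Finset.mul_sum, ← Finset.sum_sub_distrib]
  refine Finset.sum_congr rfl fun ℓ hℓ => ?_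
  rw [Finset.mem_range] at hℓ
  rw [show n + 1 - ℓ = (n - ℓ) + 1 from by omega]
  unfold hFam0
  field_simp

/-- Conversion of a coefficient family into a `Polynomial`. -/
def toPoly (m : ℕ) (a : ℕ → ℂ) : Polynomial ℂ :=
  ∑ ℓ ∈ Finset.range (m+1), Polynomial.C (a (m-ℓ)) * Polynomial.X ^ ℓ

lemma toPoly_eval (m : ℕ) (a : ℕ → ℂ) (E : ℂ) :
    (toPoly m a).eval E = ∑ ℓ ∈ Finset.range (m+1), a (m-ℓ) * E ^ ℓ := by
  rw [toPoly, Polynomial.eval_finset_sum]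
  simp

lemma akPoly_eq_eval (m : ℕ) (a : ℕ → ℂ → ℂ) (E x : ℂ) :
    akPoly m a E x = (toPoly m (fun k => a k x)).eval E := by
  rw [toPoly_eval]; rfl

lemma toPoly_coeff (m : ℕ) (a : ℕ → ℂ) (k : ℕ) :
    (toPoly m a).coeff k = if k ≤ m then a (m-k) else 0 := by
  rw [toPoly, Polynomial.finset_sum_coeff]
  have : ∀ ℓ ∈ Finset.range (m+1),
      (Polynomial.C (a (m-ℓ)) * Polynomial.X ^ ℓ).coeff k = if ℓ = k then a (m-ℓ) else 0 := by
    intro ℓ _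
    rw [Polynomial.coeff_C_mul, Polynomial.coeff_X_pow]
    by_cases hc : k = ℓ <;> simp [hc, eq_comm]
  rw [Finset.sum_congr rfl this]
  rw [Finset.sum_ite_eq' (Finset.range (m+1)) k (fun ℓ => a (m - ℓ))]
  by_cases hk : k ≤ m <;> simp [Finset.mem_range, Nat.lt_succ_iff, hk]

lemma toPoly_natDegree_le (m : ℕ) (a : ℕ → ℂ) : (toPoly m a).natDegree ≤ m := by
  apply Polynomial.natDegree_sum_le_of_forall_le
  intro ℓ hℓ
  rw [Finset.mem_range] at hℓ
  calc (Polynomial.C (a (m-ℓ)) * Polynomial.X ^ ℓ).natDegree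
      ≤ ℓ := le_trans (Polynomial.natDegree_C_mul_le (a (m-ℓ)) (Polynomial.X ^ ℓ))
        (le_of_eq (Polynomial.natDegree_X_pow ℓ))
    _ ≤ m := by omega

/-- If `F(E,x) = ∑ f_{n-ℓ}(x) Eˡ` with meromorphic coefficients and
`f 0 = -i q` is such that the expression
`(1/(4q³)) { q (2 F F_xx - F_x² + 4(E² - pq) F²) - q_x (2 F F_x + 4iE F²) }`
is a polynomial in `E` with constant coefficients (independent of `x`), then `(p,q)` is a
meromorphic algebro-geometric AKNS potential with first family `f`. -/
theorem algebroGeometric_of_polynomial_invariant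
    (p q : ℂ → ℂ) (hpm : MeromorphicOn p Set.univ) (hqm : MeromorphicOn q Set.univ)
    (hq0 : ∃ x, q x ≠ 0)
    (n : ℕ) (f : ℕ → ℂ → ℂ)
    (hfm : ∀ k, MeromorphicOn (f k) Set.univ)
    (hf0 : f 0 = fun x => -I * q x)
    (γ : ℕ → ℂ) (S : Set ℂ) (hS : S.Countable) (hScl : IsClosed S)
    (hreg : ∀ x ∉ S, AnalyticAt ℂ p x ∧ AnalyticAt ℂ q x ∧ q x ≠ 0 ∧
      ∀ k, AnalyticAt ℂ (f k) x)
    (heq : ∀ E : ℂ, ∀ x ∉ S,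
      (1 / (4 * q x ^ 3)) *
        (q x * (2 * akPoly n f E x * deriv (deriv (fun y => akPoly n f E y)) x
            - (deriv (fun y => akPoly n f E y) x) ^ 2
            + 4 * (E ^ 2 - p x * q x) * (akPoly n f E x) ^ 2)
          - deriv q x * (2 * akPoly n f E x * deriv (fun y => akPoly n f E y) x
            + 4 * I * E * (akPoly n f E x) ^ 2))
        = ∑ k ∈ Finset.range (2 * n + 3), γ (2 * n + 2 - k) * E ^ k) :
    ∃ (g h : ℕ → ℂ → ℂ) (S' : Set ℂ), IsAGData p q n f g h S' := by
  classical
  have hopen : IsOpen Sᶜ := hScl.isOpen_compl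
  have hmem : ∀ x ∉ S, Sᶜ ∈ nhds x := fun x hx => hopen.mem_nhds hx
  have hPan : ∀ x ∉ S, AnalyticAt ℂ p x := fun x hx => (hreg x hx).1
  have hQan : ∀ x ∉ S, AnalyticAt ℂ q x := fun x hx => (hreg x hx).2.1
  have hQ0 : ∀ x ∉ S, q x ≠ 0 := fun x hx => (hreg x hx).2.2.1
  have hFan : ∀ x ∉ S, ∀ k, AnalyticAt ℂ (f k) x := fun x hx => (hreg x hx).2.2.2
  have hGan : ∀ x ∉ S, ∀ k, AnalyticAt ℂ (gFam n f q k) x := by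
    intro x hx k
    cases k with
    | zero => exact analyticAt_const
    | succ k =>
      show AnalyticAt ℂ
        (fun x => (deriv (f k) x + 2*I*(if k+1 ≤ n then f (k+1) x else 0)) / (2*q x)) x
      have hden : AnalyticAt ℂ (fun x => 2 * q x) x := analyticAt_const.mul (hQan x hx)
      have hden0 : 2 * q x ≠ 0 := mul_ne_zero two_ne_zero (hQ0 x hx)
      by_cases hc : k + 1 ≤ n
      · simp only [hc, if_true]
        exact ((analyticAt_deriv' (hFan x hx k)).add
          (analyticAt_const.mul (hFan x hx (k+1)))).div hden hden0
      · simp only [hc, if_false, mul_zero, add_zero]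
        exact (analyticAt_deriv' (hFan x hx k)).div hden hden0
  have hH0an : ∀ x ∉ S, ∀ k, AnalyticAt ℂ (hFam0 n f q p k) x := fun x hx k =>
    ((analyticAt_deriv' (hGan x hx (k+1))).sub ((hPan x hx).mul (hFan x hx k))).div
      (hQan x hx) (hQ0 x hx)
  have hHan : ∀ x ∉ S, ∀ k, AnalyticAt ℂ (hFam n f q p k) x := by
    intro x hx k
    cases k with
    | zero => exact analyticAt_const.mul (hPan x hx)
    | succ k => exact hH0an x hx (k+1)
  -- derivative conversions
  have hdF : ∀ (E : ℂ), ∀ x ∉ S,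
      deriv (fun y => akPoly n f E y) x = akPoly n (fun k => deriv (f k)) E x :=
    fun E x hx => deriv_akPoly n f E x (fun k => (hFan x hx k).differentiableAt)
  have hdF' : ∀ (E : ℂ), ∀ x ∉ S,
      deriv (fun y => akPoly n (fun k => deriv (f k)) E y) x
        = akPoly n (fun k => deriv (deriv (f k))) E x :=
    fun E x hx => deriv_akPoly n _ E x
      (fun k => (analyticAt_deriv' (hFan x hx k)).differentiableAt)
  have hdF2 : ∀ (E : ℂ), ∀ x ∉ S, deriv (deriv (fun y => akPoly n f E y)) x
      = akPoly n (fun k => deriv (deriv (f k))) E x := by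
    intro E x hx
    have hev : deriv (fun y => akPoly n f E y)
        =ᶠ[nhds x] fun y => akPoly n (fun k => deriv (f k)) E y := by
      filter_upwards [hmem x hx] with y hy using hdF E y hy
    rw [hev.deriv_eq]
    exact hdF' E x hx
  have hdG : ∀ (E : ℂ), ∀ x ∉ S, deriv (fun y => akPoly (n+1) (gFam n f q) E y) x
      = akPoly (n+1) (fun k => deriv (gFam n f q k)) E x :=
    fun E x hx => deriv_akPoly _ _ E x (fun k => (hGan x hx k).differentiableAt)
  have hdH0 : ∀ (E : ℂ), ∀ x ∉ S, deriv (fun y => akPoly n (hFam0 n f q p) E y) x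
      = akPoly n (fun k => deriv (hFam0 n f q p k)) E x :=
    fun E x hx => deriv_akPoly _ _ E x (fun k => (hH0an x hx k).differentiableAt)
  -- the three basic relations
  have hR1 : ∀ (E : ℂ), ∀ x ∉ S, 2 * q x * akPoly (n+1) (gFam n f q) E x
      = akPoly n (fun k => deriv (f k)) E x + 2*I*E*akPoly n f E x :=
    fun E x hx => gRepr n f q E x (hQ0 x hx) hf0
  have hR3 : ∀ (E : ℂ), ∀ x ∉ S, q x * akPoly n (hFam0 n f q p) E x
      = akPoly (n+1) (fun k => deriv (gFam n f q k)) E x - p x * akPoly n f E x :=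
    fun E x hx => hRepr n f q p E x (hQ0 x hx)
  have hR2 : ∀ (E : ℂ), ∀ x ∉ S,
      2 * deriv q x * akPoly (n+1) (gFam n f q) E x
        + 2 * q x * akPoly (n+1) (fun k => deriv (gFam n f q k)) E x
      = akPoly n (fun k => deriv (deriv (f k))) E x
        + 2*I*E*akPoly n (fun k => deriv (f k)) E x := by
    intro E x hx
    have hev : (fun y => 2 * q y * akPoly (n+1) (gFam n f q) E y)
        =ᶠ[nhds x] fun y => akPoly n (fun k => deriv (f k)) E y + 2*I*E*akPoly n f E y := by
      filter_upwards [hmem x hx] with y hy using hR1 E y hy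
    have hL := hev.deriv_eq
    have hqd : DifferentiableAt ℂ q x := (hQan x hx).differentiableAt
    have hq' : DifferentiableAt ℂ (fun y => 2 * q y) x := hqd.const_mul 2
    have hGd : DifferentiableAt ℂ (fun y => akPoly (n+1) (gFam n f q) E y) x :=
      akPoly_differentiableAt _ _ E x (fun k => (hGan x hx k).differentiableAt)
    have hFd : DifferentiableAt ℂ (fun y => akPoly n f E y) x :=
      akPoly_differentiableAt _ _ E x (fun k => (hFan x hx k).differentiableAt)
    have hF'd : DifferentiableAt ℂ (fun y => akPoly n (fun k => deriv (f k)) E y) x :=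
      akPoly_differentiableAt _ _ E x
        (fun k => (analyticAt_deriv' (hFan x hx k)).differentiableAt)
    rw [deriv_fun_mul hq' hGd, deriv_const_mul 2 hqd,
      deriv_fun_add hF'd (hFd.const_mul (2*I*E)), deriv_const_mul (2*I*E) hFd,
      hdG E x hx, hdF E x hx, hdF' E x hx] at hL
    linear_combination hL
  -- the invariant identity with the formula version of `h`
  have hdag : ∀ x ∉ S, ∀ E : ℂ,
      akPoly n f E x * akPoly n (hFam0 n f q p) E x - (akPoly (n+1) (gFam n f q) E x)^2
        = ∑ k ∈ Finset.range (2*n+3), γ (2*n+2-k) * E^k := by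
    intro x hx E
    have hQx := hQ0 x hx
    have hQ3 : (4:ℂ) * q x ^ 3 ≠ 0 :=
      mul_ne_zero (by norm_num) (pow_ne_zero _ hQx)
    have heqx := heq E x hx
    rw [hdF E x hx, hdF2 E x hx, one_div, inv_mul_eq_div, div_eq_iff hQ3] at heqx
    apply mul_left_cancel₀ hQ3
    linear_combination heqx + 4*(q x)^2*(akPoly n f E x)*(hR3 E x hx)
      + 2*(q x)*(akPoly n f E x)*(hR2 E x hx)
      + (-2*(deriv q x)*(akPoly n f E x)
          - (q x)*(2*(q x)*(akPoly (n+1) (gFam n f q) E x)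
            + akPoly n (fun k => deriv (f k)) E x + 2*I*E*(akPoly n f E x)))*(hR1 E x hx)
      + (-4*(q x)*(akPoly n f E x)^2*E^2)*Complex.I_sq
  -- the coefficient `g 1` is constant off `S`
  have hg1 : ∀ x ∉ S, gFam n f q 1 x = -(γ 1)/2 := by
    intro x hx
    have hpoly : toPoly n (fun k => f k x) * toPoly n (fun k => hFam0 n f q p k x)
        - (toPoly (n+1) (fun k => gFam n f q k x))^2 = toPoly (2*n+2) γ := by
      apply Polynomial.funext
      intro E
      rw [Polynomial.eval_sub, Polynomial.eval_mul, Polynomial.eval_pow,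
        ← akPoly_eq_eval, ← akPoly_eq_eval, ← akPoly_eq_eval, toPoly_eval]
      rw [show 2*n+2+1 = 2*n+3 from by omega]
      exact hdag x hx E
    have hco := congrArg (fun P => Polynomial.coeff P (2*n+1)) hpoly
    simp only [Polynomial.coeff_sub] at hco
    have h1 : (toPoly n (fun k => f k x) * toPoly n (fun k => hFam0 n f q p k x)).coeff (2*n+1)
        = 0 := by
      apply Polynomial.coeff_eq_zero_of_natDegree_lt
      have hd := Polynomial.natDegree_mul_le (p := toPoly n (fun k => f k x))
        (q := toPoly n (fun k => hFam0 n f q p k x))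
      have h2 := toPoly_natDegree_le n (fun k => f k x)
      have h3 := toPoly_natDegree_le n (fun k => hFam0 n f q p k x)
      omega
    have h2 : ((toPoly (n+1) (fun k => gFam n f q k x))^2).coeff (2*n+1)
        = 2 * gFam n f q 1 x := by
      rw [sq, Polynomial.coeff_mul, Finset.Nat.sum_antidiagonal_eq_sum_range_succ_mk]
      have hc : ∀ i ∈ Finset.range (2*n+1+1),
          (toPoly (n+1) fun k => gFam n f q k x).coeff i
            * (toPoly (n+1) fun k => gFam n f q k x).coeff (2*n+1-i)
          = (if i = n then gFam n f q 1 x else 0)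
            + (if i = n+1 then gFam n f q 1 x else 0) := by
        intro i hi
        rw [Finset.mem_range] at hi
        rw [toPoly_coeff, toPoly_coeff]
        by_cases h1n : i = n
        · rw [h1n]
          rw [show 2*n+1-n = n+1 from by omega, if_pos (by omega : n ≤ n+1),
            if_pos (le_refl (n+1)), show n+1-n = 1 from by omega, Nat.sub_self,
            if_pos rfl, if_neg (by omega : ¬ n = n+1)]
          have hg0 : gFam n f q 0 x = 1 := rfl
          rw [hg0]
          ring
        · by_cases h2n : i = n+1
          · rw [h2n]
            rw [show 2*n+1-(n+1) = n from by omega, if_pos (le_refl (n+1)),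
              if_pos (by omega : n ≤ n+1), Nat.sub_self, show n+1-n = 1 from by omega,
              if_neg (by omega : ¬ n+1 = n), if_pos rfl]
            have hg0 : gFam n f q 0 x = 1 := rfl
            rw [hg0]
            ring
          · rw [if_neg h1n, if_neg h2n, add_zero]
            have : ¬(i ≤ n+1) ∨ ¬(2*n+1-i ≤ n+1) := by omega
            rcases this with hcc | hcc
            · rw [if_neg hcc, zero_mul]
            · rw [if_neg hcc, mul_zero]
      rw [Finset.sum_congr rfl hc, Finset.sum_add_distrib,
        Finset.sum_ite_eq' (Finset.range (2*n+1+1)) n (fun _ => gFam n f q 1 x),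
        Finset.sum_ite_eq' (Finset.range (2*n+1+1)) (n+1) (fun _ => gFam n f q 1 x),
        if_pos (Finset.mem_range.mpr (by omega)), if_pos (Finset.mem_range.mpr (by omega))]
      ring
    rw [h1, h2, toPoly_coeff, if_pos (by omega : 2*n+1 ≤ 2*n+2),
      show 2*n+2-(2*n+1) = 1 from by omega] at hco
    linear_combination -hco/2
  have hg1d : ∀ x ∉ S, deriv (gFam n f q 1) x = 0 := by
    intro x hx
    have hev : gFam n f q 1 =ᶠ[nhds x] fun _ => -(γ 1)/2 := by
      filter_upwards [hmem x hx] with y hy using hg1 y hy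
    rw [hev.deriv_eq, deriv_const]
  -- `hFam` and `hFam0` agree off `S`
  have hh00 : ∀ x ∉ S, hFam0 n f q p 0 x = I * p x := by
    intro x hx
    show (deriv (gFam n f q 1) x - p x * f 0 x) / q x = I * p x
    rw [hg1d x hx, hf0]
    field_simp [hQ0 x hx]
    ring
  have hHH0 : ∀ (E : ℂ), ∀ x ∉ S,
      akPoly n (hFam n f q p) E x = akPoly n (hFam0 n f q p) E x := by
    intro E x hx
    unfold akPoly
    refine Finset.sum_congr rfl fun ℓ _ => ?_
    have : hFam n f q p (n-ℓ) x = hFam0 n f q p (n-ℓ) x := by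
      cases hc : n - ℓ with
      | zero => exact (hh00 x hx).symm
      | succ k => rfl
    rw [this]
  -- the third zero-curvature equation, formula version
  have hW : ∀ x ∉ S, ∀ E : ℂ,
      akPoly n (fun k => deriv (hFam0 n f q p k)) E x
        = 2*I*E*akPoly n (hFam0 n f q p) E x + 2*p x*akPoly (n+1) (gFam n f q) E x := by
    intro x hx
    have key : ∀ E : ℂ, akPoly n f E x *
        (akPoly n (fun k => deriv (hFam0 n f q p k)) E x
          - 2*I*E*akPoly n (hFam0 n f q p) E x
          - 2*p x*akPoly (n+1) (gFam n f q) E x) = 0 := by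
      intro E
      have hconst : (fun y => akPoly n f E y * akPoly n (hFam0 n f q p) E y
          - (akPoly (n+1) (gFam n f q) E y)^2)
          =ᶠ[nhds x] fun _ => ∑ k ∈ Finset.range (2*n+3), γ (2*n+2-k) * E^k := by
        filter_upwards [hmem x hx] with y hy using hdag y hy E
      have hd0 := hconst.deriv_eq
      have hFd : DifferentiableAt ℂ (fun y => akPoly n f E y) x :=
        akPoly_differentiableAt _ _ E x (fun k => (hFan x hx k).differentiableAt)
      have hH0d : DifferentiableAt ℂ (fun y => akPoly n (hFam0 n f q p) E y) x :=
        akPoly_differentiableAt _ _ E x (fun k => (hH0an x hx k).differentiableAt)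
      have hGd : DifferentiableAt ℂ (fun y => akPoly (n+1) (gFam n f q) E y) x :=
        akPoly_differentiableAt _ _ E x (fun k => (hGan x hx k).differentiableAt)
      have hGp := (hGd.hasDerivAt.fun_pow 2).deriv
      norm_num at hGp
      rw [deriv_const, deriv_fun_sub (hFd.fun_mul hH0d) (hGd.fun_pow 2), deriv_fun_mul hFd hH0d, hGp,
        hdF E x hx, hdH0 E x hx, hdG E x hx] at hd0
      linear_combination hd0 + (akPoly n (hFam0 n f q p) E x) * (hR1 E x hx)
        - 2*(akPoly (n+1) (gFam n f q) E x)*(hR3 E x hx)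
    intro E
    set Fp := toPoly n (fun k => f k x) with hFpdef
    set Wp := toPoly n (fun k => deriv (hFam0 n f q p k) x)
      - Polynomial.C (2*I) * Polynomial.X * toPoly n (fun k => hFam0 n f q p k x)
      - Polynomial.C (2*p x) * toPoly (n+1) (fun k => gFam n f q k x) with hWpdef
    have hWeval : ∀ E : ℂ, Wp.eval E
        = akPoly n (fun k => deriv (hFam0 n f q p k)) E x
          - 2*I*E*akPoly n (hFam0 n f q p) E x
          - 2*p x*akPoly (n+1) (gFam n f q) E x := by
      intro E
      rw [hWpdef]
      simp only [Polynomial.eval_sub, Polynomial.eval_mul, Polynomial.eval_C,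
        Polynomial.eval_X]
      rw [← akPoly_eq_eval, ← akPoly_eq_eval, ← akPoly_eq_eval]
    have hFWp : Fp * Wp = 0 := by
      apply Polynomial.funext
      intro E
      rw [Polynomial.eval_mul, Polynomial.eval_zero, hWeval, hFpdef, ← akPoly_eq_eval]
      exact key E
    have hFne : Fp ≠ 0 := by
      intro hcon
      have hcoF := congrArg (fun P => Polynomial.coeff P n) hcon
      simp only [Polynomial.coeff_zero] at hcoF
      rw [hFpdef, toPoly_coeff, if_pos (le_refl n), Nat.sub_self] at hcoF
      rw [hf0] at hcoF
      simp only [neg_mul, neg_eq_zero, mul_eq_zero] at hcoF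
      rcases hcoF with hcoF | hcoF
      · exact Complex.I_ne_zero hcoF
      · exact hQ0 x hx hcoF
    have hWp0 : Wp = 0 := by
      rcases mul_eq_zero.mp hFWp with hcon | hcon
      · exact absurd hcon hFne
      · exact hcon
    have hWE := hWeval E
    rw [hWp0, Polynomial.eval_zero] at hWE
    linear_combination -hWE
  -- meromorphy of the new families
  have hgm : ∀ k, MeromorphicOn (gFam n f q k) Set.univ := by
    intro k
    cases k with
    | zero => exact fun z _ => MeromorphicAt.const _ _
    | succ k =>
      intro z hz
      show MeromorphicAt
        (fun x => (deriv (f k) x + 2*I*(if k+1 ≤ n then f (k+1) x else 0)) / (2*q x)) z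
      have hden : MeromorphicAt (fun x => 2 * q x) z :=
        (MeromorphicAt.const _ _).mul (hqm z hz)
      by_cases hc : k + 1 ≤ n
      · simp only [hc, if_true]
        exact (((hfm k z hz).deriv'').add
          ((MeromorphicAt.const _ _).mul (hfm (k+1) z hz))).div hden
      · simp only [hc, if_false, mul_zero, add_zero]
        exact ((hfm k z hz).deriv'').div hden
  have hhm : ∀ k, MeromorphicOn (hFam n f q p k) Set.univ := by
    intro k
    cases k with
    | zero => exact fun z hz => (MeromorphicAt.const _ _).mul (hpm z hz)
    | succ k =>
      intro z hz
      show MeromorphicAt (fun x => (deriv (gFam n f q (k+2)) x - p x * f (k+1) x) / q x) z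
      exact (((hgm (k+2) z hz).deriv'').sub ((hpm z hz).mul (hfm (k+1) z hz))).div (hqm z hz)
  -- assemble
  refine ⟨gFam n f q, hFam n f q p, S, hpm, hqm, hfm, hgm, hhm, hS, hScl,
    (fun x hx => ⟨hPan x hx, hQan x hx, fun k => ⟨hFan x hx k, hGan x hx k, hHan x hx k⟩⟩),
    hf0, rfl, rfl, ?_⟩
  intro E x hx
  refine ⟨?_, ?_, ?_⟩
  · rw [hdF E x hx]
    linear_combination (-1 : ℂ) * hR1 E x hx
  · rw [hdG E x hx, hHH0 E x hx]
    linear_combination (-1 : ℂ) * hR3 E x hx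
  · have hev : (fun y => akPoly n (hFam n f q p) E y)
        =ᶠ[nhds x] fun y => akPoly n (hFam0 n f q p) E y := by
      filter_upwards [hmem x hx] with y hy using hHH0 E y hy
    rw [hev.deriv_eq, hdH0 E x hx, hHH0 E x hx]
    exact hW x hx E
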